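/- The contractive drift equation KV = V - U has at most one bounded nonnegative solution. -/

import Mathlib

open MeasureTheory ENNReal

/-- The contractive drift operator `KV(x) = E[Df(x) V(f(x))]`. -/
noncomputable def Kop {X Ω : Type*} [MeasurableSpace Ω] (μ : Measure Ω)
    (f : Ω → X → X) (Df : Ω → X → ℝ≥0∞) : (X → ℝ≥0∞) → X → ℝ≥0∞ :=
  fun V x => ∫⁻ ω, Df ω x * V (f ω x) ∂μ

lemma Kop_mono {X Ω : Type*} [MeasurableSpace Ω] (μ : Measure Ω)
    (f : Ω → X → X) (Df : Ω → X → ℝ≥0∞) {A B : X → ℝ≥0∞} (h : ∀ y, A y ≤ B y) (x : X) :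
    Kop μ f Df A x ≤ Kop μ f Df B x :=
  lintegral_mono fun ω => mul_le_mul_right (h _) _

lemma Kop_const_mul {X Ω : Type*} [MeasurableSpace Ω] (μ : Measure Ω)
    (f : Ω → X → X) (Df : Ω → X → ℝ≥0∞) (a : ℝ≥0∞) (ha : a ≠ ⊤) (A : X → ℝ≥0∞) (x : X) :
    Kop μ f Df (fun y => a * A y) x = a * Kop μ f Df A x := by
  simp only [Kop]
  rw [← lintegral_const_mul' a _ ha]
  simp_rw [mul_left_comm]

/-- One-sided comparison of bounded solutions of the drift equation. -/
lemma Kop_sol_le {X Ω : Type*} [MeasurableSpace Ω] (μ : Measure Ω)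
    (f : Ω → X → X) (Df : Ω → X → ℝ≥0∞) (U V₁ V₂ : X → ℝ≥0∞) (c M : ℝ≥0∞)
    (hc0 : c ≠ 0) (hMtop : M ≠ ⊤) (hcU : ∀ x, c ≤ U x)
    (hb₁ : ∀ x, V₁ x ≤ M) (hb₂ : ∀ x, V₂ x ≤ M)
    (hsol₁ : ∀ x, Kop μ f Df V₁ x + U x = V₁ x)
    (hsol₂ : ∀ x, Kop μ f Df V₂ x + U x = V₂ x) (x : X) : V₁ x ≤ V₂ x := by
  -- basic facts about the constants
  have hUV₂ : ∀ y, U y ≤ V₂ y := fun y => (le_add_self).trans_eq (hsol₂ y)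
  have hcV₂ : ∀ y, c ≤ V₂ y := fun y => (hcU y).trans (hUV₂ y)
  have hcM : c ≤ M := (hcV₂ x).trans (hb₂ x)
  have hctop : c ≠ ⊤ := fun h => hMtop (top_le_iff.mp (h ▸ hcM))
  have hM0 : M ≠ 0 := fun h => hc0 (le_antisymm (h ▸ hcM) (zero_le (a := c)))
  set ρ : ℝ≥0∞ := (M - c) / M with hρ
  have hρtop : ρ ≠ ⊤ := (ENNReal.div_lt_top (by simp [ENNReal.sub_ne_top hMtop]) hM0).ne
  have hρ1 : ρ < 1 := by
    rw [hρ, ENNReal.div_lt_iff (Or.inl hM0) (Or.inl hMtop), one_mul]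
    exact ENNReal.sub_lt_self hMtop hM0 hc0
  have hs0top : M / c ≠ ⊤ := (ENNReal.div_lt_top hMtop hc0).ne
  -- the key contraction estimate : K V₂ ≤ ρ V₂
  have hKV₂ : ∀ y, Kop μ f Df V₂ y ≤ ρ * V₂ y := by
    intro y
    have h1 : M * Kop μ f Df V₂ y + c * V₂ y ≤ M * V₂ y := by
      calc M * Kop μ f Df V₂ y + c * V₂ y
          ≤ M * Kop μ f Df V₂ y + c * M := by
            gcongr; exact hb₂ y
        _ = M * (Kop μ f Df V₂ y + c) := by ring
        _ ≤ M * (Kop μ f Df V₂ y + U y) := by gcongr; exact hcU y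
        _ = M * V₂ y := by rw [hsol₂ y]
    have h2 : M * Kop μ f Df V₂ y ≤ (M - c) * V₂ y := by
      rw [ENNReal.sub_mul (fun _ _ => ne_top_of_le_ne_top hMtop (hb₂ y))]
      exact ENNReal.le_sub_of_add_le_right (ENNReal.mul_ne_top hctop (ne_top_of_le_ne_top hMtop (hb₂ y))) h1
    have h3 : ρ * V₂ y = (M - c) * V₂ y / M := by
      rw [hρ, div_eq_mul_inv, div_eq_mul_inv, mul_right_comm]
    rw [h3, ENNReal.le_div_iff_mul_le (Or.inl hM0) (Or.inl hMtop), mul_comm]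
    exact h2
  -- the contraction iteration
  have hInv : ∀ n : ℕ, ∀ y, V₁ y ≤ V₂ y + M / c * ρ ^ n * V₂ y := by
    intro n
    induction n with
    | zero =>
      intro y
      have : V₁ y ≤ M / c * V₂ y := by
        calc V₁ y ≤ M := hb₁ y
          _ = M / c * c := (ENNReal.div_mul_cancel hc0 hctop).symm
          _ ≤ M / c * V₂ y := by gcongr; exact hcV₂ y
      simpa using this.trans (le_add_self)
    | succ n ih =>
      intro y
      set s : ℝ≥0∞ := M / c * ρ ^ n with hs
      have hstop : s ≠ ⊤ := ENNReal.mul_ne_top hs0top (ENNReal.pow_ne_top hρtop)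
      have h1 : ∀ z, V₁ z ≤ (1 + s) * V₂ z := by
        intro z
        rw [add_mul, one_mul]
        exact ih z
      calc V₁ y = Kop μ f Df V₁ y + U y := (hsol₁ y).symm
        _ ≤ Kop μ f Df (fun z => (1 + s) * V₂ z) y + U y := by
            gcongr
            exact Kop_mono μ f Df h1 y
        _ = (1 + s) * Kop μ f Df V₂ y + U y := by
            rw [Kop_const_mul μ f Df (1 + s) (by simp [hstop]) V₂ y]
        _ = (Kop μ f Df V₂ y + U y) + s * Kop μ f Df V₂ y := by ring
        _ = V₂ y + s * Kop μ f Df V₂ y := by rw [hsol₂ y]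
        _ ≤ V₂ y + s * (ρ * V₂ y) := by gcongr; exact hKV₂ y
        _ = V₂ y + M / c * ρ ^ (n + 1) * V₂ y := by rw [hs]; ring
  -- pass to the limit
  have hlim : Filter.Tendsto (fun n : ℕ => V₂ x + M / c * ρ ^ n * V₂ x)
      Filter.atTop (nhds (V₂ x)) := by
    have h0 : Filter.Tendsto (fun n : ℕ => ρ ^ n) Filter.atTop (nhds 0) :=
      ENNReal.tendsto_pow_atTop_nhds_zero_of_lt_one hρ1
    have h1 : Filter.Tendsto (fun n : ℕ => M / c * ρ ^ n) Filter.atTop (nhds 0) := by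
      simpa using ENNReal.Tendsto.const_mul h0 (Or.inr hs0top)
    have h2 : Filter.Tendsto (fun n : ℕ => M / c * ρ ^ n * V₂ x) Filter.atTop (nhds 0) := by
      simpa using ENNReal.Tendsto.mul_const h1
        (Or.inr (ne_top_of_le_ne_top hMtop (hb₂ x)))
    simpa using Filter.Tendsto.const_add (V₂ x) h2
  exact ge_of_tendsto' hlim fun n => hInv n x

/-- The contractive drift equation `KV = V - U` (i.e. `KV + U = V`) has at most one bounded
nonnegative solution, assuming the minimal solution `V* = Σ_k K^k U` is finite. -/
theorem stmt2 {X Ω : Type*} [MeasurableSpace Ω] (μ : Measure Ω) [IsProbabilityMeasure μ]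
    (f : Ω → X → X) (Df : Ω → X → ℝ≥0∞) (U V₁ V₂ : X → ℝ≥0∞)
    (hU : ∃ c : ℝ≥0∞, 0 < c ∧ ∀ x, c ≤ U x)
    (hVstar : ∀ x, (∑' k : ℕ, (Kop μ f Df)^[k] U x) < ⊤)
    (hb₁ : ∃ M : ℝ≥0∞, M < ⊤ ∧ ∀ x, V₁ x ≤ M)
    (hb₂ : ∃ M : ℝ≥0∞, M < ⊤ ∧ ∀ x, V₂ x ≤ M)
    (hsol₁ : ∀ x, Kop μ f Df V₁ x + U x = V₁ x)
    (hsol₂ : ∀ x, Kop μ f Df V₂ x + U x = V₂ x) :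
    V₁ = V₂ := by
  obtain ⟨c, hc0, hcU⟩ := hU
  obtain ⟨M₁, hM₁, hb₁⟩ := hb₁
  obtain ⟨M₂, hM₂, hb₂⟩ := hb₂
  set M : ℝ≥0∞ := max M₁ M₂ with hM
  have hMtop : M ≠ ⊤ := by
    simp [hM, hM₁.ne, hM₂.ne]
  have hb₁' : ∀ x, V₁ x ≤ M := fun x => (hb₁ x).trans (le_max_left _ _)
  have hb₂' : ∀ x, V₂ x ≤ M := fun x => (hb₂ x).trans (le_max_right _ _)
  funext x
  exact le_antisymm
    (Kop_sol_le μ f Df U V₁ V₂ c M hc0.ne' hMtop hcU hb₁' hb₂' hsol₁ hsol₂ x)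
    (Kop_sol_le μ f Df U V₂ V₁ c M hc0.ne' hMtop hcU hb₂' hb₁' hsol₂ hsol₁ x)
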